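/- arXiv:1310.0654 — 4 statements merged into one kernel-verified Lean document; each statement's English description precedes it below -/
import Mathlib

section
/- Let X ⊆ S^Z be a one-dimensional subshift. If two words u, v ∈ S* satisfy E_X(u) = E_X(v), then E_{X^(1)}(u) = E_{X^(1)}(v), where X^(1) is the Cantor–Bendixson derivative of X (the set of non-isolated points of X). -/
/-- The set of non-isolated points of `A` (the derived set of `A` in the subspace topology). -/
def cbDerivedSet {X : Type*} [TopologicalSpace X] (A : Set X) : Set X :=
  {x | x ∈ A ∧ x ∈ closure (A \ {x})}

/-- The shift map on bi-infinite configurations. -/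
def shift1 {S : Type*} (x : ℤ → S) : ℤ → S := fun m => x (m + 1)

/-- The word `u` occurs in `x` at position `n`. -/
def occursAtW {S : Type*} (u : List S) (x : ℤ → S) (n : ℤ) : Prop :=
  ∀ i : Fin u.length, x (n + ((i : ℕ) : ℤ)) = u.get i

/-- The word `u` occurs in the configuration `x`. -/
def occursW {S : Type*} (u : List S) (x : ℤ → S) : Prop := ∃ n : ℤ, occursAtW u x n

/-- The word `u` occurs in some configuration of `X`. -/
def occursWIn {S : Type*} (X : Set (ℤ → S)) (u : List S) : Prop := ∃ x ∈ X, occursW u x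

/-- A one-dimensional subshift: a closed shift-invariant set of configurations. -/
def IsSubshift1 {S : Type*} [TopologicalSpace S] (X : Set (ℤ → S)) : Prop :=
  IsClosed X ∧ shift1 '' X = X

/-- The extender set of the word `v` in `X`. -/
def extSet {S : Type*} (X : Set (ℤ → S)) (v : List S) : Set (List S × List S) :=
  {p | occursWIn X (p.1 ++ v ++ p.2)}

/-!
Let `E_X(u) ⊆ E_X(v)` and let `x ∈ X^(1)` contain `w u w'`. Splicing `v` into `x` in place of
this occurrence of `u` gives a configuration `y` containing `w v w'`. Every finite window of `y`
around the splice reads `a v b`, where `a u b` is the corresponding window of `x`; as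
`(a, b) ∈ E_X(u) ⊆ E_X(v)`, some point of `X` has that window, so `y ∈ X` by closedness.
Splicing is continuous and injective on the open set of configurations containing `u` at the
given position, so it carries points of `X` other than `x` that converge to `x` to points of `X`
other than `y` that converge to `y`: `y` is not isolated either.
-/

open Set Filter Topology

section Words

variable {S : Type*}

theorem occursAtW_iff {u : List S} {x : ℤ → S} {n : ℤ} :
    occursAtW u x n ↔ ∀ i (hi : i < u.length), x (n + i) = u[i] :=
  ⟨fun h i hi => h ⟨i, hi⟩, fun h i => h i i.isLt⟩

theorem occursAtW_append {u v : List S} {x : ℤ → S} {n : ℤ} :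
    occursAtW (u ++ v) x n ↔ occursAtW u x n ∧ occursAtW v x (n + u.length) := by
  simp only [occursAtW_iff]
  refine ⟨fun h => ⟨fun i hi => ?_, fun i hi => ?_⟩, fun ⟨hu, hv⟩ i hi => ?_⟩
  · have := h i (by simp; omega)
    rwa [List.getElem_append_left hi] at this
  · have := h (u.length + i) (by simp; omega)
    rw [List.getElem_append_right (by omega)] at this
    simpa [add_assoc] using this
  · rcases lt_or_ge i u.length with hi' | hi'
    · simpa [List.getElem_append_left hi'] using hu i hi'
    · simpa [List.getElem_append_right hi', hi'] using hv (i - u.length) (by simp at hi; omega)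

theorem occursAtW.eqOn {w : List S} {x y : ℤ → S} {n : ℤ} (hx : occursAtW w x n)
    (hy : occursAtW w y n) : EqOn x y (Ico n (n + w.length)) := by
  rintro t ⟨ht₁, ht₂⟩
  obtain ⟨i, rfl⟩ : ∃ i : ℕ, t = n + i := ⟨(t - n).toNat, by omega⟩
  rw [occursAtW_iff.1 hx i (by omega), occursAtW_iff.1 hy i (by omega)]

theorem occursAtW_comp_add {w : List S} {z : ℤ → S} {q : ℤ} (h : occursAtW w z q) (p : ℤ) :
    occursAtW w (fun t => z (t + (q - p))) p := by
  intro i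
  simpa [add_right_comm, add_sub_cancel] using h i

def window (x : ℤ → S) (s : ℤ) (len : ℕ) : List S :=
  List.ofFn fun i : Fin len => x (s + i)

@[simp]
theorem length_window (x : ℤ → S) (s : ℤ) (len : ℕ) : (window x s len).length = len :=
  List.length_ofFn

theorem occursAtW_window (x : ℤ → S) (s : ℤ) (len : ℕ) :
    occursAtW (window x s len) x s := by
  rw [occursAtW_iff]
  intro i hi
  simp [window]

end Words

section Shift

variable {S : Type*}

theorem comp_add_mem_of_shift_image_eq {X : Set (ℤ → S)} (hX : shift1 '' X = X) (k : ℤ)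
    {z : ℤ → S} (hz : z ∈ X) : (fun t => z (t + k)) ∈ X := by
  induction k using Int.induction_on with
  | zero => simpa using hz
  | succ k ih =>
    rw [← hX]
    exact ⟨_, ih, funext fun t => by simp [shift1, add_assoc, add_comm 1 (k : ℤ)]⟩
  | pred k ih =>
    obtain ⟨w, hw, hwz⟩ := hX.symm ▸ ih
    convert hw using 1
    funext t
    simpa [shift1, sub_add_cancel, add_sub_assoc', sub_add_eq_add_sub] using
      (congrFun hwz (t - 1)).symm

theorem exists_occursAtW_of_occursWIn {X : Set (ℤ → S)} (hX : shift1 '' X = X) {w : List S}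
    (h : occursWIn X w) (p : ℤ) : ∃ z ∈ X, occursAtW w z p := by
  obtain ⟨z, hz, q, hq⟩ := h
  exact ⟨_, comp_add_mem_of_shift_image_eq hX (q - p) hz, occursAtW_comp_add hq p⟩

end Shift

section Splice

variable {S : Type*}

/-- `x` with its block `x[n, n + ℓ)` replaced by `v`, the tail of `x` shifted accordingly. -/
def splice (x : ℤ → S) (n : ℤ) (ℓ : ℕ) (v : List S) : ℤ → S := fun t =>
  if t < n then x t
  else if h : (t - n).toNat < v.length then v[(t - n).toNat]
  else x (t - v.length + ℓ)

variable {x : ℤ → S} {n : ℤ} {ℓ : ℕ} {v : List S}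

theorem splice_of_lt {t : ℤ} (ht : t < n) : splice x n ℓ v t = x t := if_pos ht

theorem splice_of_le {t : ℤ} (ht : n + v.length ≤ t) :
    splice x n ℓ v t = x (t - v.length + ℓ) := by
  rw [splice, if_neg (by omega), dif_neg (by omega)]

theorem occursAtW_splice : occursAtW v (splice x n ℓ v) n := by
  rw [occursAtW_iff]
  intro i hi
  rw [splice, if_neg (by omega), dif_pos (by omega)]
  simp

theorem occursAtW_splice_append {w u w' : List S} {p : ℤ} (h : occursAtW (w ++ u ++ w') x p) :
    occursAtW (w ++ v ++ w') (splice x (p + w.length) u.length v) p := by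
  rw [occursAtW_append, occursAtW_append] at h ⊢
  simp only [occursAtW_iff, List.length_append, Nat.cast_add] at h ⊢
  obtain ⟨⟨hw, -⟩, hw'⟩ := h
  refine ⟨⟨fun i hi => ?_, occursAtW_iff.1 occursAtW_splice⟩, fun i hi => ?_⟩
  · rw [splice_of_lt (by omega), hw i hi]
  · rw [splice_of_le (by omega), ← hw' i hi]
    congr 1
    ring

theorem continuous_splice [TopologicalSpace S] :
    Continuous fun x : ℤ → S => splice x n ℓ v := by
  refine continuous_pi fun t => ?_
  unfold splice
  split_ifs
  exacts [continuous_apply t, continuous_const, continuous_apply _]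

theorem splice_injOn {u : List S} :
    InjOn (fun x : ℤ → S => splice x n u.length v) {x | occursAtW u x n} := by
  intro x hx x' hx' hxx'
  funext t
  rcases lt_or_ge t n with ht | ht
  · simpa [splice_of_lt ht] using congrFun hxx' t
  rcases lt_or_ge t (n + u.length) with ht' | ht'
  · exact (occursAtW.eqOn hx hx') ⟨ht, ht'⟩
  · have := congrFun hxx' (t - u.length + v.length)
    simp only [splice_of_le (show n + v.length ≤ t - u.length + v.length by omega)] at this
    simpa using this

theorem isOpen_setOf_occursAtW [TopologicalSpace S] [DiscreteTopology S] (u : List S) (n : ℤ) :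
    IsOpen {x : ℤ → S | occursAtW u x n} := by
  simp only [occursAtW, ofPred_forall]
  refine isOpen_iInter_of_finite fun i => ?_
  exact (isOpen_discrete {u.get i}).preimage
    (continuous_apply (n + (i : ℕ)) : Continuous fun x : ℤ → S => x (n + (i : ℕ)))

end Splice

section Subshift

variable {S : Type*} [TopologicalSpace S]

theorem mem_of_forall_exists_eqOn_Ico {X : Set (ℤ → S)} (hX : IsClosed X) {y : ℤ → S}
    (n : ℤ) (h : ∀ m : ℕ, ∃ z ∈ X, EqOn z y (Ico (n - m) (n + m))) : y ∈ X := by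
  choose z hzX hzy using h
  have hzy' : Tendsto z atTop (𝓝 y) := tendsto_pi_nhds.2 fun t => by
    refine tendsto_const_nhds.congr' ?_
    filter_upwards [eventually_gt_atTop (t - n).natAbs] with m hm
    exact (hzy m ⟨by omega, by omega⟩).symm
  exact hX.mem_of_tendsto hzy' (Eventually.of_forall hzX)

variable {X : Set (ℤ → S)} {u v : List S}

theorem splice_mem (hX : IsSubshift1 X) (huv : extSet X u ⊆ extSet X v) {x : ℤ → S}
    (hx : x ∈ X) {n : ℤ} (hu : occursAtW u x n) : splice x n u.length v ∈ X := by
  refine mem_of_forall_exists_eqOn_Ico hX.1 n fun m => ?_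
  set a := window x (n - m) m
  set b := window x (n + u.length) m
  have hstart : n - m + a.length = n := by simp [a]
  have hxab : occursAtW (a ++ u ++ b) x (n - m) := by
    refine occursAtW_append.2 ⟨occursAtW_append.2 ⟨occursAtW_window x (n - m) m, ?_⟩, ?_⟩
    · rwa [hstart]
    have hend : n - m + ((a ++ u).length : ℤ) = n + u.length := by simp [a]; ring
    rw [hend]
    exact occursAtW_window x (n + u.length) m
  have hab : (a, b) ∈ extSet X v := huv ⟨x, hx, _, hxab⟩
  obtain ⟨z, hz, hzab⟩ := exists_occursAtW_of_occursWIn hX.2 hab (n - m)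
  have hyab := occursAtW_splice_append (v := v) hxab
  rw [hstart] at hyab
  exact ⟨z, hz, (hzab.eqOn hyab).mono (Ico_subset_Ico_right (by simp [a, b]; omega))⟩

theorem splice_mem_cbDerivedSet [DiscreteTopology S] (hX : IsSubshift1 X)
    (huv : extSet X u ⊆ extSet X v) {x : ℤ → S} (hx : x ∈ cbDerivedSet X) {n : ℤ}
    (hu : occursAtW u x n) : splice x n u.length v ∈ cbDerivedSet X := by
  refine ⟨splice_mem hX huv hx.1 hu, map_mem_closure (f := fun c => splice c n u.length v)
    continuous_splice ((isOpen_setOf_occursAtW u n).inter_closure ⟨hu, hx.2⟩) ?_⟩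
  rintro c ⟨hcu, hcX, hcx⟩
  exact ⟨splice_mem hX huv hcX hcu, fun hc => hcx (splice_injOn hcu hu hc)⟩

theorem extSet_cbDerivedSet_mono [DiscreteTopology S] (hX : IsSubshift1 X)
    (huv : extSet X u ⊆ extSet X v) :
    extSet (cbDerivedSet X) u ⊆ extSet (cbDerivedSet X) v := by
  rintro ⟨w, w'⟩ ⟨x, hx, p, hocc⟩
  have hu : occursAtW u x (p + w.length) := (occursAtW_append.1 (occursAtW_append.1 hocc).1).2
  exact ⟨_, splice_mem_cbDerivedSet hX huv hx hu, p, occursAtW_splice_append hocc⟩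

end Subshift

theorem extSet_eq_in_derivative_general {S : Type} [TopologicalSpace S]
    [DiscreteTopology S] (X : Set (ℤ → S)) (hX : IsSubshift1 X) (u v : List S)
    (h : extSet X u = extSet X v) :
    extSet (cbDerivedSet X) u = extSet (cbDerivedSet X) v :=
  (extSet_cbDerivedSet_mono hX h.subset).antisymm (extSet_cbDerivedSet_mono hX h.symm.subset)

/-- If two words have equal extender sets in a one-dimensional subshift `X`,
then they have equal extender sets in the Cantor–Bendixson derivative of `X`. -/
theorem extSet_eq_in_derivative {S : Type} [Fintype S] [TopologicalSpace S]
    [DiscreteTopology S] (X : Set (ℤ → S)) (hX : IsSubshift1 X) (u v : List S)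
    (h : extSet X u = extSet X v) :
    extSet (cbDerivedSet X) u = extSet (cbDerivedSet X) v :=
  extSet_eq_in_derivative_general X hX u v h
end

section
/- The Cantor–Bendixson derivative X^(1) (the set of non-isolated points) of a one-dimensional sofic shift X is again a sofic shift. -/
/-- A one-dimensional subshift of finite type: the configurations avoiding a finite set of
forbidden words. -/
def IsSFT1 {S : Type*} (X : Set (ℤ → S)) : Prop :=
  ∃ F : Set (List S), F.Finite ∧ X = {x | ∀ u ∈ F, ¬ occursW u x}

/-- A one-dimensional sofic shift: the image of an SFT (over some finite alphabet carrying the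
discrete topology) under a block map, i.e. a continuous shift-commuting map. -/
def IsSofic1 {S : Type*} [TopologicalSpace S] (X : Set (ℤ → S)) : Prop :=
  ∃ (T : Type) (_ : Fintype T) (Y : Set (ℤ → T)) (f : (ℤ → T) → (ℤ → S)),
    IsSFT1 Y ∧
    (letI : TopologicalSpace T := ⊥
     Continuous f) ∧
    (∀ y, f (shift1 y) = shift1 (f y)) ∧ f '' Y = X

/-!
Every sofic shift is the image `φ ∘ p` of the bi-infinite walks `p` of a finite graph (take as
vertices the windows of points of the SFT, wide enough for the radius of the block map and for
the forbidden words). A point `x = φ ∘ p` is then non-isolated iff there is a second walk `q` with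
`φ ∘ q = x` such that either at every position `i` the pair `(p i, q i)` is left-separated (it
sits on two walks whose labels differ somewhere to the left of `i`), or at every position it is
right-separated. Splicing the separating walks into `p` and `q` far to the left (or right) gives
two points of `X` that agree with `x` on a given window but not with each other; conversely,
approximants of `x` give walks `q` separated from `p` outside `[-n, n]`, and compactness yields a
single such `q`. Left- and right-separation are conditions on a single vertex pair, so the triples
`(p i, q i, side)` are again the walks of a finite graph, and `X^(1)` is again a label image.
-/

open Filter Topology

namespace SymbolicDynamics

section Cylinder

variable {α β : Type*}

def cylinder (x : ℤ → α) (N : ℕ) : Set (ℤ → α) := {y | ∀ i : ℤ, i.natAbs ≤ N → y i = x i}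

lemma cylinder_subset_cylinder {x y : ℤ → α} {M N : ℕ} (hy : y ∈ cylinder x M) (hMN : M ≤ N) :
    cylinder y N ⊆ cylinder x M :=
  fun _ hz i hi => (hz i (hi.trans hMN)).trans (hy i hi)

variable [TopologicalSpace α] [DiscreteTopology α]

lemma hasBasis_nhds_cylinder (x : ℤ → α) : (𝓝 x).HasBasis (fun _ => True) (cylinder x) := by
  simp only [nhds_pi, nhds_discrete]
  refine (hasBasis_pi_pure x).to_hasBasis (fun I hI => ?_) fun N _ => ?_
  · obtain ⟨N, hN⟩ := (hI.image Int.natAbs).bddAbove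
    exact ⟨N, trivial, fun y hy i hi => hy i (hN ⟨i, hi, rfl⟩)⟩
  · refine ⟨Set.Icc (-N : ℤ) N, Set.finite_Icc _ _, fun y hy i hi => hy i ?_⟩
    simp only [Set.mem_Icc]
    omega

lemma mem_cbDerivedSet_iff {A : Set (ℤ → α)} {x : ℤ → α} :
    x ∈ cbDerivedSet A ↔ x ∈ A ∧ ∀ N, ∃ y ∈ A, y ≠ x ∧ y ∈ cylinder x N := by
  simp [cbDerivedSet, mem_closure_iff_nhds_basis (hasBasis_nhds_cylinder x), and_assoc]

lemma mem_cbDerivedSet_of_forall_exists_ne {A : Set (ℤ → α)} {x : ℤ → α} (hx : x ∈ A)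
    (h : ∀ N, ∃ y ∈ A, ∃ z ∈ A, y ∈ cylinder x N ∧ z ∈ cylinder x N ∧ y ≠ z) :
    x ∈ cbDerivedSet A := by
  refine mem_cbDerivedSet_iff.2 ⟨hx, fun N => ?_⟩
  obtain ⟨y, hy, z, hz, hyN, hzN, hyz⟩ := h N
  by_cases hyx : y = x
  · exact ⟨z, hz, fun hzx => hyz (hyx.trans hzx.symm), hzN⟩
  · exact ⟨y, hy, hyx, hyN⟩

lemma isClosed_setOf_apply (P : α → Prop) (i : ℤ) : IsClosed {p : ℤ → α | P (p i)} :=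
  (isClosed_discrete {a | P a}).preimage (continuous_apply i)

lemma isClosed_setOf_apply_apply (P : α → α → Prop) (i j : ℤ) :
    IsClosed {p : ℤ → α | P (p i) (p j)} :=
  (isClosed_discrete {ab : α × α | P ab.1 ab.2}).preimage
    (f := fun p : ℤ → α => (p i, p j)) (by fun_prop)

lemma exists_radius [Finite α] [TopologicalSpace β] [DiscreteTopology β] {g : (ℤ → α) → β}
    (hg : Continuous g) : ∃ R : ℕ, ∀ x, ∀ y ∈ cylinder x R, g y = g x := by
  have hloc : ∀ x, ∃ N, cylinder x N ⊆ g ⁻¹' {g x} := fun x => by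
    simpa using (hasBasis_nhds_cylinder x).mem_iff.1
      (hg.continuousAt ((isOpen_discrete {g x}).mem_nhds rfl))
  choose N hN using hloc
  obtain ⟨t, -, hcover⟩ := isCompact_univ.elim_nhds_subcover (fun x => cylinder x (N x))
    fun x _ => (hasBasis_nhds_cylinder x).mem_of_mem trivial
  refine ⟨t.sup N, fun x y hy => ?_⟩
  obtain ⟨x₀, hx₀, hx⟩ := Set.mem_iUnion₂.1 (hcover (Set.mem_univ x))
  exact (hN x₀ (cylinder_subset_cylinder hx (Finset.le_sup hx₀) hy)).trans (hN x₀ hx).symm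

end Cylinder

section Shift

variable {α β : Type*}

lemma shift1_comp_add (y : ℤ → α) (n : ℤ) :
    shift1 (fun k => y (k + n)) = fun k => y (k + (n + 1)) := by
  funext k
  simp only [shift1, add_right_comm k, add_assoc]

lemma shift1_injective : Function.Injective (shift1 : (ℤ → α) → ℤ → α) :=
  fun x y h => funext fun k => by simpa [shift1] using congrFun h (k - 1)

lemma map_comp_add_of_map_shift1 {f : (ℤ → α) → (ℤ → β)} (hf : ∀ y, f (shift1 y) = shift1 (f y))
    (y : ℤ → α) (n : ℤ) : f (fun k => y (k + n)) = fun k => f y (k + n) := by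
  induction n using Int.induction_on with
  | zero => simp
  | succ n ih => rw [← shift1_comp_add, hf, ih, shift1_comp_add (f y)]
  | pred n ih =>
    apply shift1_injective
    rw [← hf, shift1_comp_add, shift1_comp_add (f y), sub_add_cancel, ih]

end Shift

section Walks

variable {V : Type*}

def walks (G : V → V → Prop) : Set (ℤ → V) := {p | ∀ i, G (p i) (p (i + 1))}

variable {G : V → V → Prop} {p q : ℤ → V}

lemma comp_add_mem_walks (hp : p ∈ walks G) (c : ℤ) : (fun i => p (i + c)) ∈ walks G :=
  fun i => by simpa only [add_right_comm] using hp (i + c)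

lemma piecewise_mem_walks (hp : p ∈ walks G) (hq : q ∈ walks G) {t : ℤ} (ht : p t = q t) :
    (fun i => if i < t then p i else q i) ∈ walks G := by
  intro i
  by_cases hi : i + 1 < t
  · simpa [hi, (by omega : i < t)] using hp i
  by_cases hit : i < t
  · obtain rfl : t = i + 1 := by omega
    simpa [hit, ← ht] using hp i
  · simpa [hi, hit] using hq i

lemma apply_eq_apply_zero_of_mem_walks {β : Type*} {f : V → β} (hf : ∀ a b, G a b → f a = f b)
    (hp : p ∈ walks G) (i : ℤ) : f (p i) = f (p 0) := by
  induction i using Int.induction_on with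
  | zero => rfl
  | succ i ih => rw [← hf _ _ (hp i), ih]
  | pred i ih => rw [hf _ _ (by simpa using hp (-i - 1)), ih]

lemma isClosed_walks [TopologicalSpace V] [DiscreteTopology V] : IsClosed (walks G) := by
  simp only [walks, Set.ofPred_forall]
  exact isClosed_iInter fun i => isClosed_setOf_apply_apply G i (i + 1)

lemma occursW_pair_iff {a b : V} {z : ℤ → V} :
    occursW [a, b] z ↔ ∃ n, z n = a ∧ z (n + 1) = b := by
  refine ⟨fun ⟨n, h⟩ => ⟨n, by simpa using h 0, by simpa using h 1⟩, fun ⟨n, ha, hb⟩ => ⟨n, ?_⟩⟩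
  intro i
  fin_cases i <;> simpa

variable [Finite V]

lemma isSFT1_walks : IsSFT1 (walks G) := by
  refine ⟨(fun ab : V × V => [ab.1, ab.2]) '' {ab | ¬ G ab.1 ab.2}, (Set.toFinite _).image _, ?_⟩
  ext z
  simp only [walks, Set.mem_ofPred_eq, Set.mem_image, Prod.exists]
  constructor
  · rintro hz _ ⟨a, b, hab, rfl⟩ hocc
    obtain ⟨n, rfl, rfl⟩ := occursW_pair_iff.1 hocc
    exact hab (hz n)
  · intro hz i
    by_contra hG
    exact hz _ ⟨_, _, hG, rfl⟩ (occursW_pair_iff.2 ⟨i, rfl, rfl⟩)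

end Walks

lemma isSofic1_image_walks {V S : Type} [Fintype V] [TopologicalSpace S] (G : V → V → Prop)
    (φ : V → S) : IsSofic1 ((fun p => φ ∘ p) '' walks G) := by
  refine ⟨V, inferInstance, walks G, fun p => φ ∘ p, isSFT1_walks, ?_, fun p => rfl, rfl⟩
  let _ : TopologicalSpace V := ⊥
  have : DiscreteTopology V := ⟨rfl⟩
  exact continuous_pi fun k => continuous_of_discreteTopology.comp (continuous_apply k)

lemma forall_or_forall_of_monotone_of_antitone {L R : ℤ → Prop} (hL : Monotone L)
    (hR : Antitone R) (h : ∀ n : ℕ, L (-n) ∨ R n) : (∀ i, L i) ∨ ∀ i, R i := by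
  refine or_iff_not_imp_left.2 fun hnL i => ?_
  obtain ⟨i₀, hi₀⟩ := not_forall.1 hnL
  exact (h (i₀.natAbs + i.natAbs)).elim (fun hl => absurd (hL (by omega) hl) hi₀)
    fun hr => hR (by omega) hr

section Separation

variable {V S : Type*} (G : V → V → Prop) (φ : V → S)

def LeftSeparated (a b : V) : Prop :=
  ∃ p ∈ walks G, ∃ q ∈ walks G, ∃ t k, k < t ∧ p t = a ∧ q t = b ∧ φ (p k) ≠ φ (q k)

def RightSeparated (a b : V) : Prop :=
  ∃ p ∈ walks G, ∃ q ∈ walks G, ∃ t k, t < k ∧ p t = a ∧ q t = b ∧ φ (p k) ≠ φ (q k)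

variable {G φ} {p q : ℤ → V}

lemma LeftSeparated.exists_splice (hp : p ∈ walks G) (hq : q ∈ walks G) {i : ℤ}
    (h : LeftSeparated G φ (p i) (q i)) :
    ∃ p' ∈ walks G, ∃ q' ∈ walks G, (∀ j, i ≤ j → p' j = p j ∧ q' j = q j) ∧
      ∃ k < i, φ (p' k) ≠ φ (q' k) := by
  obtain ⟨p₀, hp₀, q₀, hq₀, t, k, hkt, hpt, hqt, hk⟩ := h
  refine ⟨_, piecewise_mem_walks (comp_add_mem_walks hp₀ (t - i)) hp (t := i) (by simpa using hpt),
    _, piecewise_mem_walks (comp_add_mem_walks hq₀ (t - i)) hq (t := i) (by simpa using hqt),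
    fun j hj => by simp [not_lt.2 hj], k - (t - i), by omega, ?_⟩
  simpa [show k - (t - i) < i by omega] using hk

lemma RightSeparated.exists_splice (hp : p ∈ walks G) (hq : q ∈ walks G) {i : ℤ}
    (h : RightSeparated G φ (p i) (q i)) :
    ∃ p' ∈ walks G, ∃ q' ∈ walks G, (∀ j, j ≤ i → p' j = p j ∧ q' j = q j) ∧
      ∃ k > i, φ (p' k) ≠ φ (q' k) := by
  obtain ⟨p₀, hp₀, q₀, hq₀, t, k, htk, hpt, hqt, hk⟩ := h
  refine ⟨_, piecewise_mem_walks hp (comp_add_mem_walks hp₀ (t - i)) (t := i)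
      (by simpa using hpt.symm),
    _, piecewise_mem_walks hq (comp_add_mem_walks hq₀ (t - i)) (t := i) (by simpa using hqt.symm),
    fun j hj => ?_, k - (t - i), by omega, ?_⟩
  · rcases hj.lt_or_eq with hj | rfl
    · simp [hj]
    · simp [hpt, hqt]
  · simpa [show ¬ k - (t - i) < i by omega] using hk

lemma LeftSeparated.mono (hp : p ∈ walks G) (hq : q ∈ walks G) {i j : ℤ} (hij : i ≤ j)
    (h : LeftSeparated G φ (p i) (q i)) : LeftSeparated G φ (p j) (q j) := by
  obtain ⟨p', hp', q', hq', hagree, k, hk, hne⟩ := h.exists_splice hp hq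
  exact ⟨p', hp', q', hq', j, k, by omega, (hagree j hij).1, (hagree j hij).2, hne⟩

lemma RightSeparated.anti (hp : p ∈ walks G) (hq : q ∈ walks G) {i j : ℤ} (hij : i ≤ j)
    (h : RightSeparated G φ (p j) (q j)) : RightSeparated G φ (p i) (q i) := by
  obtain ⟨p', hp', q', hq', hagree, k, hk, hne⟩ := h.exists_splice hp hq
  exact ⟨p', hp', q', hq', i, k, by omega, (hagree i hij).1, (hagree i hij).2, hne⟩

lemma comp_mem_cylinder_of_agree {p' : ℤ → V} {N : ℕ} (hpq : φ ∘ p = φ ∘ q)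
    (hagree : ∀ j : ℤ, j.natAbs ≤ N → p' j = q j) : φ ∘ p' ∈ cylinder (φ ∘ p) N :=
  fun j hj => (congrArg φ (hagree j hj)).trans (congrFun hpq j).symm

lemma separated_of_comp_ne (hp : p ∈ walks G) (hq : q ∈ walks G) {n : ℕ}
    (hcyl : φ ∘ q ∈ cylinder (φ ∘ p) n) (hne : φ ∘ q ≠ φ ∘ p) :
    LeftSeparated G φ (p (-n)) (q (-n)) ∨ RightSeparated G φ (p n) (q n) := by
  obtain ⟨j, hj⟩ := Function.ne_iff.1 hne
  have hjn : n < j.natAbs := lt_of_not_ge fun h => hj (hcyl j h)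
  rcases lt_or_gt_of_ne (show j ≠ 0 by omega) with hj0 | hj0
  · exact .inl ⟨p, hp, q, hq, -n, j, by omega, rfl, rfl, Ne.symm hj⟩
  · exact .inr ⟨p, hp, q, hq, n, j, by omega, rfl, rfl, Ne.symm hj⟩

variable [TopologicalSpace S] [DiscreteTopology S]

lemma comp_mem_cbDerivedSet_of_leftSeparated (hp : p ∈ walks G) (hq : q ∈ walks G)
    (hpq : φ ∘ p = φ ∘ q) (h : ∀ i, LeftSeparated G φ (p i) (q i)) :
    φ ∘ p ∈ cbDerivedSet ((fun p => φ ∘ p) '' walks G) := by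
  refine mem_cbDerivedSet_of_forall_exists_ne ⟨p, hp, rfl⟩ fun N => ?_
  obtain ⟨p', hp', q', hq', hagree, k, -, hk⟩ := (h (-N)).exists_splice hp hq
  exact ⟨_, ⟨p', hp', rfl⟩, _, ⟨q', hq', rfl⟩,
    comp_mem_cylinder_of_agree rfl fun j hj => (hagree j (by omega)).1,
    comp_mem_cylinder_of_agree hpq fun j hj => (hagree j (by omega)).2,
    fun h => hk (congrFun h k)⟩

lemma comp_mem_cbDerivedSet_of_rightSeparated (hp : p ∈ walks G) (hq : q ∈ walks G)
    (hpq : φ ∘ p = φ ∘ q) (h : ∀ i, RightSeparated G φ (p i) (q i)) :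
    φ ∘ p ∈ cbDerivedSet ((fun p => φ ∘ p) '' walks G) := by
  refine mem_cbDerivedSet_of_forall_exists_ne ⟨p, hp, rfl⟩ fun N => ?_
  obtain ⟨p', hp', q', hq', hagree, k, -, hk⟩ := (h N).exists_splice hp hq
  exact ⟨_, ⟨p', hp', rfl⟩, _, ⟨q', hq', rfl⟩,
    comp_mem_cylinder_of_agree rfl fun j hj => (hagree j (by omega)).1,
    comp_mem_cylinder_of_agree hpq fun j hj => (hagree j (by omega)).2,
    fun h => hk (congrFun h k)⟩

lemma exists_separated_of_comp_mem_cbDerivedSet [Finite V] (hp : p ∈ walks G)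
    (hx : φ ∘ p ∈ cbDerivedSet ((fun p => φ ∘ p) '' walks G)) :
    ∃ q ∈ walks G, φ ∘ p = φ ∘ q ∧
      ((∀ i, LeftSeparated G φ (p i) (q i)) ∨ ∀ i, RightSeparated G φ (p i) (q i)) := by
  let _ : TopologicalSpace V := ⊥
  have : DiscreteTopology V := ⟨rfl⟩
  let D : ℕ → Set (ℤ → V) := fun n =>
    walks G ∩ {q | ∀ j : ℤ, j.natAbs ≤ n → φ (q j) = φ (p j)} ∩
      {q | LeftSeparated G φ (p (-n)) (q (-n)) ∨ RightSeparated G φ (p n) (q n)}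
  have hD_closed : ∀ n, IsClosed (D n) := fun n => by
    refine (isClosed_walks.inter ?_).inter (isClosed_setOf_apply_apply
      (fun a b => LeftSeparated G φ (p (-n)) a ∨ RightSeparated G φ (p n) b) (-n) n)
    simp only [Set.ofPred_forall]
    exact isClosed_iInter fun j => isClosed_iInter fun _ =>
      isClosed_setOf_apply (fun v => φ v = φ (p j)) j
  have hD_anti : ∀ n, D (n + 1) ⊆ D n := by
    rintro n q ⟨⟨hq, hcyl⟩, hsep⟩
    refine ⟨⟨hq, fun j hj => hcyl j (by omega)⟩, hsep.imp (LeftSeparated.mono hp hq ?_)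
      (RightSeparated.anti hp hq ?_)⟩ <;> omega
  have hD_nonempty : ∀ n, (D n).Nonempty := fun n => by
    obtain ⟨_, ⟨q, hq, rfl⟩, hne, hcyl⟩ := (mem_cbDerivedSet_iff.1 hx).2 n
    exact ⟨q, ⟨hq, hcyl⟩, separated_of_comp_ne hp hq hcyl hne⟩
  obtain ⟨q, hq⟩ := IsCompact.nonempty_iInter_of_sequence_nonempty_isCompact_isClosed D hD_anti
    hD_nonempty (hD_closed 0).isCompact hD_closed
  simp only [Set.mem_iInter] at hq
  have hq_walk : q ∈ walks G := (hq 0).1.1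
  exact ⟨q, hq_walk, funext fun i => ((hq i.natAbs).1.2 i le_rfl).symm,
    forall_or_forall_of_monotone_of_antitone (fun _ _ hij => LeftSeparated.mono hp hq_walk hij)
      (fun _ _ hij => RightSeparated.anti hp hq_walk hij) fun n => (hq n).2⟩

end Separation

section DerivedGraph

variable {V S : Type*} (G : V → V → Prop) (φ : V → S)

/-- The last coordinate records on which side the two walks are separated. -/
def derivedGraph (a b : V × V × Bool) : Prop :=
  G a.1 b.1 ∧ G a.2.1 b.2.1 ∧ a.2.2 = b.2.2 ∧ φ a.1 = φ a.2.1 ∧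
    if a.2.2 then LeftSeparated G φ a.1 a.2.1 else RightSeparated G φ a.1 a.2.1

theorem cbDerivedSet_image_walks [Finite V] [TopologicalSpace S] [DiscreteTopology S] :
    cbDerivedSet ((fun p => φ ∘ p) '' walks G) =
      (fun z => (φ ∘ Prod.fst) ∘ z) '' walks (derivedGraph G φ) := by
  ext x
  constructor
  · intro hx
    obtain ⟨p, hp, rfl⟩ := hx.1
    obtain ⟨q, hq, hpq, hsep | hsep⟩ := exists_separated_of_comp_mem_cbDerivedSet hp hx
    · exact ⟨fun i => (p i, q i, true),
        fun i => ⟨hp i, hq i, rfl, congrFun hpq i, by simpa using hsep i⟩, rfl⟩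
    · exact ⟨fun i => (p i, q i, false),
        fun i => ⟨hp i, hq i, rfl, congrFun hpq i, by simpa using hsep i⟩, rfl⟩
  · rintro ⟨z, hz, rfl⟩
    have hp : Prod.fst ∘ z ∈ walks G := fun i => (hz i).1
    have hq : (fun i => (z i).2.1) ∈ walks G := fun i => (hz i).2.1
    have hpq : φ ∘ Prod.fst ∘ z = φ ∘ fun i => (z i).2.1 := funext fun i => (hz i).2.2.2.1
    have hside : ∀ i, (z i).2.2 = (z 0).2.2 :=
      apply_eq_apply_zero_of_mem_walks (f := fun a => a.2.2) (fun _ _ h => h.2.2.1) hz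
    cases h : (z 0).2.2
    · exact comp_mem_cbDerivedSet_of_rightSeparated hp hq hpq fun i => by
        simpa [hside i, h] using (hz i).2.2.2.2
    · exact comp_mem_cbDerivedSet_of_leftSeparated hp hq hpq fun i => by
        simpa [hside i, h] using (hz i).2.2.2.2

end DerivedGraph

section Window

variable {T : Type*}

def window (R : ℕ) (y : ℤ → T) (n : ℤ) : Fin (2 * R + 1) → T := fun j => y (n - R + j)

def windowGraph (Y : Set (ℤ → T)) (R : ℕ) (u v : Fin (2 * R + 1) → T) : Prop :=
  ∃ y ∈ Y, ∃ n, window R y n = u ∧ window R y (n + 1) = v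

variable {Y : Set (ℤ → T)} {R : ℕ} {p : ℤ → Fin (2 * R + 1) → T}

lemma window_mem_walks {y : ℤ → T} (hy : y ∈ Y) : window R y ∈ walks (windowGraph Y R) :=
  fun n => ⟨y, hy, n, rfl, rfl⟩

lemma windowGraph.apply_succ {u v : Fin (2 * R + 1) → T} (h : windowGraph Y R u v) (j : ℕ)
    (hj : j + 1 < 2 * R + 1) : u ⟨j + 1, hj⟩ = v ⟨j, by omega⟩ := by
  obtain ⟨y, -, n, rfl, rfl⟩ := h
  simp only [window]
  congr 1
  push_cast
  ring

lemma apply_eq_apply_add_of_mem_walks (hp : p ∈ walks (windowGraph Y R)) (n : ℤ) (j : ℕ)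
    (hj : j < 2 * R + 1) : p n ⟨j, hj⟩ = p (n + j) ⟨0, by omega⟩ := by
  induction j generalizing n with
  | zero => simp
  | succ j ih =>
    rw [(hp n).apply_succ j hj, ih (n + 1) (by omega), Nat.cast_succ, add_comm (j : ℤ),
      add_assoc]

lemma eq_window_of_mem_walks (hp : p ∈ walks (windowGraph Y R)) :
    p = window R (fun n => p n ⟨R, by omega⟩) := by
  funext n j
  simp only [window, apply_eq_apply_add_of_mem_walks hp _ R,
    apply_eq_apply_add_of_mem_walks hp n j, sub_add_eq_add_sub, add_sub_cancel_right]

lemma mem_of_forall_window_eq {F : Set (List T)} (hY : Y = {y | ∀ u ∈ F, ¬ occursW u y})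
    (hF : ∀ u ∈ F, u.length ≤ 2 * R + 1) {y : ℤ → T}
    (h : ∀ n, ∃ y' ∈ Y, ∃ n', window R y' n' = window R y n) : y ∈ Y := by
  subst hY
  rintro u hu ⟨t, ht⟩
  obtain ⟨y', hy', n', hw⟩ := h (t + R)
  refine hy' u hu ⟨n' - R, fun i => ?_⟩
  have := congrFun hw ⟨i, by have := hF u hu; omega⟩
  simp only [window, add_sub_cancel_right] at this
  rw [this, ht i]

lemma image_window_eq_walks {F : Set (List T)} (hY : Y = {y | ∀ u ∈ F, ¬ occursW u y})
    (hF : ∀ u ∈ F, u.length ≤ 2 * R + 1) : window R '' Y = walks (windowGraph Y R) := by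
  refine Set.Subset.antisymm (Set.image_subset_iff.2 fun y hy => window_mem_walks hy)
    fun p hp => ⟨_, mem_of_forall_window_eq hY hF fun n => ?_, (eq_window_of_mem_walks hp).symm⟩
  obtain ⟨y', hy', n', hw, -⟩ := hp n
  exact ⟨y', hy', n', hw.trans (congrFun (eq_window_of_mem_walks hp) n)⟩

variable {S : Type*}

/-- The window is extended to a configuration by repeating its end symbols; this does not matter
when `f` has radius at most `R`. -/
def windowLabel (f : (ℤ → T) → (ℤ → S)) (R : ℕ) (u : Fin (2 * R + 1) → T) : S :=
  f (fun i => u ⟨min (i + R).toNat (2 * R), by omega⟩) 0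

lemma apply_eq_windowLabel {f : (ℤ → T) → (ℤ → S)} (hf : ∀ y, f (shift1 y) = shift1 (f y))
    (hR : ∀ x, ∀ y ∈ cylinder x R, f y 0 = f x 0) (y : ℤ → T) (n : ℤ) :
    f y n = windowLabel f R (window R y n) := by
  rw [windowLabel, hR (fun k => y (k + n)), map_comp_add_of_map_shift1 hf]
  · simp only [zero_add]
  · intro i hi
    simp only [window]
    congr 1
    omega

end Window

end SymbolicDynamics

open SymbolicDynamics

theorem IsSofic1.exists_eq_image_walks {S : Type} [TopologicalSpace S] [DiscreteTopology S]
    {X : Set (ℤ → S)} (hX : IsSofic1 X) :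
    ∃ (V : Type) (_ : Fintype V) (G : V → V → Prop) (φ : V → S),
      X = (fun p => φ ∘ p) '' walks G := by
  classical
  obtain ⟨T, _, Y, f, ⟨F, hF, hY⟩, hf, hcomm, rfl⟩ := hX
  let _ : TopologicalSpace T := ⊥
  have : DiscreteTopology T := ⟨rfl⟩
  obtain ⟨r, hr⟩ := exists_radius ((continuous_apply 0).comp hf)
  let R := r + hF.toFinset.sup List.length
  have hR : ∀ x, ∀ y ∈ cylinder x R, f y 0 = f x 0 := fun x y hy =>
    hr x y (cylinder_subset_cylinder (fun _ _ => rfl) (Nat.le_add_right _ _) hy)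
  have hFR : ∀ u ∈ F, u.length ≤ 2 * R + 1 := fun u hu => by
    have := Finset.le_sup (f := List.length) (hF.mem_toFinset.2 hu)
    omega
  refine ⟨Fin (2 * R + 1) → T, inferInstance, windowGraph Y R, windowLabel f R, ?_⟩
  rw [← image_window_eq_walks hY hFR, Set.image_image]
  exact Set.image_congr fun y _ => funext (apply_eq_windowLabel hcomm hR y)

theorem sofic_derivative_sofic_general {S : Type} [TopologicalSpace S] [DiscreteTopology S]
    (X : Set (ℤ → S)) (hX : IsSofic1 X) :
    IsSofic1 (cbDerivedSet X) := by
  obtain ⟨V, _, G, φ, rfl⟩ := hX.exists_eq_image_walks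
  rw [cbDerivedSet_image_walks]
  exact isSofic1_image_walks _ _

/-- The Cantor–Bendixson derivative of a one-dimensional sofic shift is
again sofic. -/
theorem sofic_derivative_sofic {S : Type} [Fintype S] [TopologicalSpace S] [DiscreteTopology S]
    (X : Set (ℤ → S)) (hX : IsSofic1 X) :
    IsSofic1 (cbDerivedSet X) :=
  sofic_derivative_sofic_general X hX
end

section
/- The subpattern poset of a countable d-dimensional subshift satisfies the ascending chain condition: for every sequence x_1 ≤ x_2 ≤ x_3 ≤ ⋯ of configurations of a countable subshift X (ordered by the subpattern preorder), there exists n such that x_i and x_j have exactly the same set of occurring finite patterns for all i, j ≥ n. -/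
/-- Translation of a `d`-dimensional configuration. -/
def shiftD {S : Type*} {d : ℕ} (n : Fin d → ℤ) (x : (Fin d → ℤ) → S) : (Fin d → ℤ) → S :=
  fun m => x (n + m)

/-- A `d`-dimensional subshift: a closed translation-invariant set of configurations. -/
def IsSubshiftD {S : Type*} [TopologicalSpace S] {d : ℕ} (X : Set ((Fin d → ℤ) → S)) : Prop :=
  IsClosed X ∧ ∀ n : Fin d → ℤ, shiftD n '' X = X

/-- `x ≤ y` in the `d`-dimensional subpattern preorder: every finite pattern occurring in `x`
occurs in `y`. -/
def patLEd {S : Type*} {d : ℕ} (x y : (Fin d → ℤ) → S) : Prop :=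
  ∀ (D : Finset (Fin d → ℤ)) (n : Fin d → ℤ), ∃ n', ∀ m ∈ D, y (n' + m) = x (n + m)


/-!
Let `Y` be the closure of the union of the shift orbits of the `x n`. It is a compact, hence
Baire, countable space. The points of `Y` in which every pattern of every `x n` occurs form a
dense `Gδ` in `Y`, since by the chain condition the shifts of `x m` with `m ≥ n` are already
dense in `Y`. In a countable Baire space a dense `Gδ` contains an isolated point, and the
isolated points of `Y` lie in the union of the orbits themselves. So some shift of some `x m`,
and therefore `x m`, dominates the whole chain.
-/

open Set Topology

section Patterns

variable {S : Type*} {d : ℕ}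

lemma patLEd_refl (x : (Fin d → ℤ) → S) : patLEd x x :=
  fun _ n => ⟨n, fun _ _ => rfl⟩

lemma patLEd_trans {x y z : (Fin d → ℤ) → S} (hxy : patLEd x y) (hyz : patLEd y z) :
    patLEd x z := by
  intro D n
  obtain ⟨n', hn'⟩ := hxy D n
  obtain ⟨n'', hn''⟩ := hyz D n'
  exact ⟨n'', fun m hm => (hn'' m hm).trans (hn' m hm)⟩

lemma patLEd_shiftD_left (k : Fin d → ℤ) (x : (Fin d → ℤ) → S) : patLEd (shiftD k x) x :=
  fun _ n => ⟨k + n, fun m _ => by rw [add_assoc]; rfl⟩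

lemma patLEd_shiftD_right (k : Fin d → ℤ) (x : (Fin d → ℤ) → S) : patLEd x (shiftD k x) :=
  fun _ n => ⟨-k + n, fun m _ => by
    rw [shiftD, ← add_assoc, ← add_assoc, add_neg_cancel, zero_add]⟩

lemma patLEd_of_le {x : ℕ → (Fin d → ℤ) → S} (hchain : ∀ n, patLEd (x n) (x (n + 1)))
    {n m : ℕ} (h : n ≤ m) : patLEd (x n) (x m) := by
  induction m, h using Nat.le_induction with
  | base => exact patLEd_refl _
  | succ m _ ih => exact patLEd_trans ih (hchain m)

def shiftOrbit (x : (Fin d → ℤ) → S) : Set ((Fin d → ℤ) → S) :=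
  range fun k => shiftD k x

lemma IsSubshiftD.shiftOrbit_subset [TopologicalSpace S] {X : Set ((Fin d → ℤ) → S)}
    (hX : IsSubshiftD X) {x : (Fin d → ℤ) → S} (hx : x ∈ X) : shiftOrbit x ⊆ X := by
  rintro _ ⟨k, rfl⟩
  exact hX.2 k ▸ mem_image_of_mem _ hx

lemma continuous_shiftD [TopologicalSpace S] (k : Fin d → ℤ) : Continuous (shiftD (S := S) k) :=
  continuous_pi fun _ => continuous_apply _

end Patterns

section ProductTopology

variable {ι S : Type*} [TopologicalSpace S] [DiscreteTopology S]

lemma isOpen_setOf_forall_mem_eq (D : Finset ι) (w : ι → S) :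
    IsOpen {z : ι → S | ∀ i ∈ D, z i = w i} := by
  simpa [Set.pi] using isOpen_set_pi D.finite_toSet fun i _ => isOpen_discrete {w i}

lemma mem_closure_iff_forall_finset {A : Set (ι → S)} {w : ι → S} :
    w ∈ closure A ↔ ∀ D : Finset ι, ∃ a ∈ A, ∀ i ∈ D, a i = w i := by
  rw [mem_closure_iff]
  constructor
  · intro h D
    obtain ⟨a, ha, haA⟩ := h _ (isOpen_setOf_forall_mem_eq D w) fun _ _ => rfl
    exact ⟨a, haA, ha⟩
  · intro h V hV hwV
    obtain ⟨D, u, hu, hDV⟩ := isOpen_pi_iff.mp hV w hwV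
    obtain ⟨a, haA, ha⟩ := h D
    exact ⟨a, hDV fun i hi => (ha i hi).symm ▸ (hu i hi).2, haA⟩

end ProductTopology

section Subshift

variable {S : Type*} [TopologicalSpace S] [DiscreteTopology S] {d : ℕ}

lemma isGδ_setOf_patLEd (x : (Fin d → ℤ) → S) : IsGδ {z | patLEd x z} := by
  have : {z | patLEd x z} =
      ⋂ (D : Finset (Fin d → ℤ)) (n : Fin d → ℤ),
        ⋃ n', shiftD n' ⁻¹' {z | ∀ m ∈ D, z m = x (n + m)} := by
    ext z; simp [patLEd, shiftD]
  rw [this]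
  refine .iInter fun D => .iInter fun n => (isOpen_iUnion fun n' => ?_).isGδ
  exact (isOpen_setOf_forall_mem_eq D _).preimage (continuous_shiftD n')

lemma shiftOrbit_subset_closure_shiftOrbit {x y : (Fin d → ℤ) → S} (h : patLEd x y) :
    shiftOrbit x ⊆ closure (shiftOrbit y) := by
  rintro _ ⟨k, rfl⟩
  refine mem_closure_iff_forall_finset.2 fun D => ?_
  obtain ⟨n', hn'⟩ := patLEd_trans (patLEd_shiftD_left k x) h D 0
  exact ⟨shiftD n' y, mem_range_self n', fun m hm => (hn' m hm).trans (by rw [zero_add])⟩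

end Subshift

lemma Dense.exists_mem_isOpen_singleton_of_isGδ {Y : Type*} [TopologicalSpace Y] [T1Space Y]
    [BaireSpace Y] [Countable Y] [Nonempty Y] {G : Set Y} (hG : IsGδ G) (hGd : Dense G) :
    ∃ y ∈ G, IsOpen {y} := by
  set I : Set Y := {y | IsOpen {y}}
  -- each non-isolated point `z` has a dense open complement `{z}ᶜ`
  have hI : I = ⋂ z ∈ Iᶜ, {z}ᶜ := by
    ext y
    simp only [I, mem_ofPred_eq, mem_iInter, mem_compl_iff, mem_singleton_iff]
    exact ⟨fun hy z hz hyz => hz (hyz ▸ hy), fun h => by_contra fun hy => h y hy rfl⟩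
  have hId : Dense I := hI ▸ dense_biInter_of_isOpen (fun _ _ => isOpen_compl_singleton)
    (to_countable _) fun _ hz => dense_compl_singleton_iff_not_open.2 hz
  have hIG : IsGδ I := compl_compl I ▸ (to_countable Iᶜ).isGδ_compl
  exact (hGd.inter_of_Gδ hG hIG hId).nonempty

lemma mem_of_isOpen_singleton_closure {α : Type*} [TopologicalSpace α] {O : Set α}
    {y : closure O} (hy : IsOpen {y}) : (y : α) ∈ O := by
  have hd : Dense (Subtype.val ⁻¹' O : Set (closure O)) := by
    rw [Subtype.dense_iff, Subtype.image_preimage_coe, inter_eq_right.2 subset_closure]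
  obtain ⟨z, rfl, hz⟩ := hd.inter_open_nonempty {y} hy (singleton_nonempty y)
  exact hz

section Chain

variable {S : Type*} [TopologicalSpace S] [DiscreteTopology S] {d : ℕ}
  {x : ℕ → (Fin d → ℤ) → S}

lemma closure_iUnion_shiftOrbit_subset (hchain : ∀ n, patLEd (x n) (x (n + 1))) (n : ℕ) :
    closure (⋃ m, shiftOrbit (x m)) ⊆ closure (⋃ m ≥ n, shiftOrbit (x m)) := by
  refine closure_minimal (iUnion_subset fun m => ?_) isClosed_closure
  calc shiftOrbit (x m) ⊆ closure (shiftOrbit (x (max m n))) :=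
        shiftOrbit_subset_closure_shiftOrbit (patLEd_of_le hchain (le_max_left m n))
    _ ⊆ closure (⋃ m ≥ n, shiftOrbit (x m)) :=
        closure_mono (subset_iUnion₂_of_subset (max m n) (le_max_right m n) subset_rfl)

lemma dense_setOf_patLEd_closure_iUnion_shiftOrbit (hchain : ∀ n, patLEd (x n) (x (n + 1)))
    (n : ℕ) :
    Dense (Subtype.val ⁻¹' {z | patLEd (x n) z} : Set (closure (⋃ m, shiftOrbit (x m)))) := by
  rw [Subtype.dense_iff, Subtype.image_preimage_coe]
  refine (closure_iUnion_shiftOrbit_subset hchain n).trans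
    (closure_mono (iUnion₂_subset fun m hm => ?_))
  rintro _ ⟨k, rfl⟩
  exact ⟨subset_closure (mem_iUnion.2 ⟨m, k, rfl⟩),
    patLEd_trans (patLEd_of_le hchain hm) (patLEd_shiftD_right k (x m))⟩

theorem exists_forall_patLEd_of_countable [Finite S] {X : Set ((Fin d → ℤ) → S)}
    (hX : IsSubshiftD X) (hc : X.Countable) (hmem : ∀ n, x n ∈ X)
    (hchain : ∀ n, patLEd (x n) (x (n + 1))) : ∃ m, ∀ n, patLEd (x n) (x m) := by
  set Y := closure (⋃ m, shiftOrbit (x m))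
  have hYX : Y ⊆ X :=
    closure_minimal (iUnion_subset fun m => hX.shiftOrbit_subset (hmem m)) hX.1
  have : CompactSpace Y := isCompact_iff_compactSpace.mp isClosed_closure.isCompact
  have : Countable Y := (hc.mono hYX).to_subtype
  have : Nonempty Y :=
    ⟨⟨x 0, subset_closure (mem_iUnion.2 ⟨0, 0, funext fun m => congrArg (x 0) (zero_add m)⟩)⟩⟩
  set G : Set Y := ⋂ n, Subtype.val ⁻¹' {z | patLEd (x n) z}
  have hG : IsGδ G := .iInter fun n => (isGδ_setOf_patLEd _).preimage continuous_subtype_val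
  have hGd : Dense G := dense_iInter_of_Gδ
    (fun n => (isGδ_setOf_patLEd _).preimage continuous_subtype_val)
    (dense_setOf_patLEd_closure_iUnion_shiftOrbit hchain)
  obtain ⟨y, hyG, hy⟩ := hGd.exists_mem_isOpen_singleton_of_isGδ hG
  obtain ⟨m, k, hk⟩ := mem_iUnion.1 (mem_of_isOpen_singleton_closure hy)
  exact ⟨m, fun n => patLEd_trans (mem_iInter.1 hyG n) (hk ▸ patLEd_shiftD_left k (x m))⟩

end Chain

theorem countable_subshift_ACC_general {S : Type} [Fintype S] [TopologicalSpace S] [DiscreteTopology S]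
    {d : ℕ} (X : Set ((Fin d → ℤ) → S)) (hX : IsSubshiftD X) (hc : X.Countable)
    (x : ℕ → (Fin d → ℤ) → S) (hmem : ∀ n, x n ∈ X) (hchain : ∀ n, patLEd (x n) (x (n + 1))) :
    ∃ N : ℕ, ∀ i j : ℕ, N ≤ i → N ≤ j → patLEd (x i) (x j) ∧ patLEd (x j) (x i) := by
  obtain ⟨m, hm⟩ := exists_forall_patLEd_of_countable hX hc hmem hchain
  have hle : ∀ i j, m ≤ j → patLEd (x i) (x j) := fun i j hj =>
    patLEd_trans (hm i) (patLEd_of_le hchain hj)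
  exact ⟨m, fun i j hi hj => ⟨hle i j hj, hle j i hi⟩⟩

/-- The subpattern poset of a countable `d`-dimensional subshift has the
ascending chain condition: every ascending chain is eventually constant (the configurations
eventually all have exactly the same patterns). -/
theorem countable_subshift_ACC {S : Type} [Fintype S] [TopologicalSpace S] [DiscreteTopology S]
    {d : ℕ} (hd : 1 ≤ d) (X : Set ((Fin d → ℤ) → S)) (hX : IsSubshiftD X) (hc : X.Countable)
    (x : ℕ → (Fin d → ℤ) → S) (hmem : ∀ n, x n ∈ X) (hchain : ∀ n, patLEd (x n) (x (n + 1))) :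
    ∃ N : ℕ, ∀ i j : ℕ, N ≤ i → N ≤ j → patLEd (x i) (x j) ∧ patLEd (x j) (x i) :=
  countable_subshift_ACC_general X hX hc x hmem hchain
end

section
/- Let X ⊆ S^{Z^2} be a two-dimensional SFT defined by nearest-neighbor (Wang tile) constraints. If X is countable or southward deterministic, then X has the R property. -/
/-- Translation of a two-dimensional configuration. -/
def shift2 {S : Type*} (n : ℤ × ℤ) (x : ℤ × ℤ → S) : ℤ × ℤ → S := fun m => x (n + m)

/-- The pattern with domain `D` and content `p` occurs in `x`. -/
def occurs2 {S : Type*} (D : Finset (ℤ × ℤ)) (p : ℤ × ℤ → S) (x : ℤ × ℤ → S) : Prop :=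
  ∃ n : ℤ × ℤ, ∀ m ∈ D, x (n + m) = p m

/-- A two-dimensional subshift of finite type: the configurations in which no pattern from a
fixed finite set of forbidden finite patterns occurs. -/
def IsSFT2 {S : Type*} (X : Set (ℤ × ℤ → S)) : Prop :=
  ∃ F : Set (Finset (ℤ × ℤ) × (ℤ × ℤ → S)), F.Finite ∧
    X = {x | ∀ P ∈ F, ¬ occurs2 P.1 P.2 x}

/-- `x ≤ y` in the subpattern preorder: every finite pattern occurring in `x` occurs in `y`. -/
def patLE2 {S : Type*} (x y : ℤ × ℤ → S) : Prop :=
  ∀ (D : Finset (ℤ × ℤ)) (n : ℤ × ℤ), ∃ n' : ℤ × ℤ, ∀ m ∈ D, y (n' + m) = x (n + m)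

/-- `x < y` in the subpattern preorder. -/
def patLT2 {S : Type*} (x y : ℤ × ℤ → S) : Prop := patLE2 x y ∧ ¬ patLE2 y x

/-- The `i`-th row of a two-dimensional configuration. -/
def row {S : Type*} (x : ℤ × ℤ → S) (i : ℤ) : ℤ → S := fun j => x (j, i)

/-- The (horizontal) projective subdynamics of `X`: its set of rows at height `0`. -/
def PS2 {S : Type*} (X : Set (ℤ × ℤ → S)) : Set (ℤ → S) := (fun x => row x 0) '' X

/-- The shift orbit of a one-dimensional configuration. -/
def orbit1 {S : Type*} (y : ℤ → S) : Set (ℤ → S) := {z | ∃ n : ℤ, z = fun j => y (j + n)}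

/-- `X` is southward deterministic: two configurations of `X` agreeing on the upper half-plane
`{(a,b) : b ≥ 1}` are equal. -/
def SouthDet {S : Type*} (X : Set (ℤ × ℤ → S)) : Prop :=
  ∀ x ∈ X, ∀ y ∈ X, (∀ a b : ℤ, 1 ≤ b → x (a, b) = y (a, b)) → x = y

/-- The R property of a two-dimensional subshift: whenever a row content `y` repeats (up to a
shift) in a configuration with no occurrence of `y` strictly in between, the rows in between,
their number, and the shift are uniquely determined (rows are indexed from `1` to `k`). -/
def RProperty {S : Type*} (X : Set (ℤ × ℤ → S)) : Prop :=
  ∀ y ∈ PS2 X, ∃ (k : ℕ) (z : ℕ → ℤ → S), 1 ≤ k ∧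
    (∀ i, 1 ≤ i → i ≤ k → z i ∈ PS2 X) ∧
    z 1 = y ∧ z k ∈ orbit1 y ∧ (∀ i, 2 ≤ i → i ≤ k - 1 → z i ∉ orbit1 y) ∧
    ∀ x ∈ X, ∀ m n : ℤ, m < n → row x m ∈ orbit1 y → row x n ∈ orbit1 y →
      (∀ i : ℤ, m < i → i < n → row x i ∉ orbit1 y) →
      n - m + 1 = (k : ℤ) ∧
      ∃ t : ℤ, ∀ i : ℤ, m ≤ i → i ≤ n → row x i = fun l => z (1 + (i - m).toNat) (l + t)

/-- A two-dimensional SFT defined by nearest-neighbor (Wang tile) constraints: all forbidden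
patterns have domain `{(0,0),(1,0)}` or `{(0,0),(0,1)}`. -/
def IsNNSFT {S : Type*} (X : Set (ℤ × ℤ → S)) : Prop :=
  ∃ FH FV : Set (S × S),
    X = {x | ∀ m : ℤ × ℤ, (x m, x (m + (1, 0))) ∉ FH ∧ (x m, x (m + (0, 1))) ∉ FV}

/-! A nearest-neighbour SFT only constrains pairs of vertically adjacent rows, so its
configurations are the bi-infinite chains of rows for a shift-invariant relation, and two
configurations sharing a row can be cut and glued along it. A stretch between consecutive
occurrences of the orbit of `y`, translated so that it starts with `y` at height `0`, is a first
return to that orbit; the R property says that all first returns have the same length and the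
same rows up to one horizontal shift.

Under southward determinism, aligning the top rows of two first returns by a translation makes
all rows below coincide, and the absence of intermediate occurrences of the orbit then forces
equal lengths. Without determinism, two genuinely different first returns can be stacked above
height `0` in any order `ε : ℕ → Bool`; neither is an initial piece of the other, so distinct
`ε` give distinct configurations and `X` is uncountable. -/

variable {S : Type*}

def hshift (a : ℤ) (r : ℤ → S) : ℤ → S := fun j => r (j + a)

@[simp]
lemma hshift_zero (r : ℤ → S) : hshift 0 r = r := by
  funext j
  simp [hshift]

lemma hshift_hshift (a b : ℤ) (r : ℤ → S) : hshift a (hshift b r) = hshift (a + b) r := by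
  funext j
  simp [hshift, add_assoc]

@[simp]
lemma hshift_neg_hshift (a : ℤ) (r : ℤ → S) : hshift (-a) (hshift a r) = r := by
  rw [hshift_hshift, neg_add_cancel, hshift_zero]

lemma hshift_injective (a : ℤ) : Function.Injective (hshift (S := S) a) :=
  Function.LeftInverse.injective (hshift_neg_hshift a)

lemma mem_orbit1_self (y : ℤ → S) : y ∈ orbit1 y := ⟨0, by simp⟩

lemma hshift_mem_orbit1 (a : ℤ) (y : ℤ → S) : hshift a y ∈ orbit1 y := ⟨a, rfl⟩

@[simp]
lemma hshift_mem_orbit1_iff {a : ℤ} {r y : ℤ → S} : hshift a r ∈ orbit1 y ↔ r ∈ orbit1 y := by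
  constructor
  · rintro ⟨n, hn⟩
    rw [← hshift_neg_hshift a r]
    exact ⟨-a + n, (congrArg (hshift (-a)) hn).trans (hshift_hshift _ _ y)⟩
  · rintro ⟨n, rfl⟩
    exact ⟨a + n, hshift_hshift a n y⟩

lemma row_shift2 (a b : ℤ) (x : ℤ × ℤ → S) (i : ℤ) :
    row (shift2 (a, b) x) i = hshift a (row x (b + i)) := by
  funext j
  simp [row, shift2, hshift, add_comm]

def ofRows (R : ℤ → ℤ → S) : ℤ × ℤ → S := fun p => R p.2 p.1

@[simp]
lemma row_ofRows (R : ℤ → ℤ → S) (i : ℤ) : row (ofRows R) i = R i := rfl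

def rowChains (E : (ℤ → S) → (ℤ → S) → Prop) : Set (ℤ × ℤ → S) :=
  {x | ∀ i, E (row x i) (row x (i + 1))}

def ShiftInvariant (E : (ℤ → S) → (ℤ → S) → Prop) : Prop :=
  ∀ a r r', E r r' → E (hshift a r) (hshift a r')

lemma IsNNSFT.exists_eq_rowChains {X : Set (ℤ × ℤ → S)} (hX : IsNNSFT X) :
    ∃ E : (ℤ → S) → (ℤ → S) → Prop, ShiftInvariant E ∧ X = rowChains E := by
  obtain ⟨FH, FV, rfl⟩ := hX
  refine ⟨fun r r' => ∀ j, (r j, r (j + 1)) ∉ FH ∧ (r j, r' j) ∉ FV, ?_, ?_⟩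
  · intro a r r' h j
    simpa [hshift, add_right_comm] using h (j + a)
  · ext x
    exact ⟨fun h i j => by simpa [row] using h (j, i),
      fun h m => by simpa [row, Prod.add_def] using h m.2 m.1⟩

section RowChains

variable {E : (ℤ → S) → (ℤ → S) → Prop} {x x' : ℤ × ℤ → S}

lemma shift2_mem_rowChains (hE : ShiftInvariant E) (n : ℤ × ℤ) (hx : x ∈ rowChains E) :
    shift2 n x ∈ rowChains E := by
  intro i
  rw [row_shift2, row_shift2, ← add_assoc]
  exact hE _ _ _ (hx (n.2 + i))

lemma row_mem_PS2 (hE : ShiftInvariant E) (hx : x ∈ rowChains E) (i : ℤ) :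
    row x i ∈ PS2 (rowChains E) :=
  ⟨shift2 (0, i) x, shift2_mem_rowChains hE _ hx, by simp [row_shift2]⟩

lemma glue_mem_rowChains (hx : x ∈ rowChains E) (hx' : x' ∈ rowChains E) {k : ℤ}
    (h : row x' k = row x k) :
    ofRows (fun i => if i ≤ k then row x' i else row x i) ∈ rowChains E := by
  intro i
  simp only [row_ofRows]
  rcases lt_trichotomy i k with hi | rfl | hi
  · rw [if_pos hi.le, if_pos (by omega)]
    exact hx' i
  · rw [if_pos le_rfl, if_neg (by omega), h]
    exact hx i
  · rw [if_neg (by omega), if_neg (by omega)]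
    exact hx i

lemma SouthDet.row_eq_of_row_eq (hdet : SouthDet (rowChains E)) (hE : ShiftInvariant E)
    (hx : x ∈ rowChains E) (hx' : x' ∈ rowChains E) {k : ℤ} (h : row x' k = row x k) {i : ℤ}
    (hi : i ≤ k) : row x' i = row x i := by
  set w := ofRows (fun i => if i ≤ k then row x' i else row x i)
  have hw : w ∈ rowChains E := glue_mem_rowChains hx hx' h
  have hshifted : shift2 (0, k) w = shift2 (0, k) x := by
    refine hdet _ (shift2_mem_rowChains hE _ hw) _ (shift2_mem_rowChains hE _ hx) fun a b hb => ?_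
    simp [w, shift2, ofRows, row, show ¬ b ≤ 0 by omega]
  have := congrArg (row · (i - k)) hshifted
  simpa [row_shift2, w, hi] using this

end RowChains

structure IsFirstReturn (y : ℤ → S) (x : ℤ × ℤ → S) (n : ℕ) : Prop where
  pos : 0 < n
  row_zero : row x 0 = y
  row_len : row x n ∈ orbit1 y
  row_not_mem : ∀ i : ℕ, 0 < i → i < n → row x i ∉ orbit1 y

def UniqueFirstReturns (X : Set (ℤ × ℤ → S)) : Prop :=
  ∀ (y : ℤ → S) (x x' : ℤ × ℤ → S) (n n' : ℕ), x ∈ X → x' ∈ X →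
    IsFirstReturn y x n → IsFirstReturn y x' n' →
    n' = n ∧ ∃ t, ∀ i : ℕ, i ≤ n → row x' i = hshift t (row x i)

section FirstReturns

variable {E : (ℤ → S) → (ℤ → S) → Prop} {x : ℤ × ℤ → S} {y : ℤ → S}

lemma exists_isFirstReturn_of_gap (hE : ShiftInvariant E) (hx : x ∈ rowChains E) {m n : ℤ}
    (hmn : m < n) (hm : row x m ∈ orbit1 y) (hn : row x n ∈ orbit1 y)
    (hgap : ∀ i, m < i → i < n → row x i ∉ orbit1 y) :
    ∃ x' ∈ rowChains E, IsFirstReturn y x' (n - m).toNat ∧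
      ∃ u, ∀ i : ℤ, row x (m + i) = hshift u (row x' i) := by
  obtain ⟨u, hu⟩ := hm
  have hrows (i : ℤ) : row (shift2 (-u, m) x) i = hshift (-u) (row x (m + i)) := row_shift2 ..
  refine ⟨shift2 (-u, m) x, shift2_mem_rowChains hE _ hx, ⟨by omega, ?_, ?_, ?_⟩, u, fun i => ?_⟩
  · rw [hrows, add_zero, hu]
    exact hshift_neg_hshift u y
  · rw [hrows, hshift_mem_orbit1_iff, show m + ((n - m).toNat : ℤ) = n by omega]
    exact hn
  · intro i h0 hi
    rw [hrows, hshift_mem_orbit1_iff]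
    exact hgap _ (by omega) (by omega)
  · rw [hrows, hshift_hshift, add_neg_cancel, hshift_zero]

theorem rProperty_of_uniqueFirstReturns (hE : ShiftInvariant E)
    (hU : UniqueFirstReturns (rowChains E)) : RProperty (rowChains E) := by
  intro y hy
  by_cases hret : ∃ x ∈ rowChains E, ∃ n, IsFirstReturn y x n
  · obtain ⟨x₀, hx₀, n₀, hr₀⟩ := hret
    refine ⟨n₀ + 1, fun i => row x₀ ↑(i - 1), by omega, fun i _ _ => row_mem_PS2 hE hx₀ _,
      by simpa using hr₀.row_zero, by simpa using hr₀.row_len,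
      fun i h2 hk => hr₀.row_not_mem _ (by omega) (by omega), ?_⟩
    intro x hx m n hmn hm hn hgap
    obtain ⟨x', hx', hr', u, hu⟩ := exists_isFirstReturn_of_gap hE hx hmn hm hn hgap
    obtain ⟨hlen, t, ht⟩ := hU y x₀ x' n₀ _ hx₀ hx' hr₀ hr'
    refine ⟨by omega, u + t, fun i hmi hin => ?_⟩
    have hi := hu (i - m)
    rw [add_sub_cancel, show i - m = ((i - m).toNat : ℤ) by omega, ht _ (by omega),
      hshift_hshift] at hi
    simp only [Nat.add_sub_cancel_left]
    exact hi
  · refine ⟨1, fun _ => y, le_rfl, fun _ _ _ => hy, rfl, mem_orbit1_self y,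
      fun i h2 h1 => by omega, ?_⟩
    intro x hx m n hmn hm hn hgap
    obtain ⟨x', hx', hr', -⟩ := exists_isFirstReturn_of_gap hE hx hmn hm hn hgap
    exact absurd ⟨x', hx', _, hr'⟩ hret

theorem uniqueFirstReturns_of_southDet (hE : ShiftInvariant E) (hdet : SouthDet (rowChains E)) :
    UniqueFirstReturns (rowChains E) := by
  intro y x x' n n' hx hx' hr hr'
  obtain ⟨α, hα⟩ := hr.row_len
  obtain ⟨β, hβ⟩ := hr'.row_len
  -- translating `x` by `(β - α, n - n')` puts its row `n` exactly onto row `n'` of `x'`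
  have hc (i : ℤ) : row (shift2 (β - α, n - n') x) i = hshift (β - α) (row x (n - n' + i)) :=
    row_shift2 ..
  have hbelow (i : ℤ) (hi : i ≤ n') : row x' i = hshift (β - α) (row x (n - n' + i)) := by
    rw [← hc]
    refine hdet.row_eq_of_row_eq hE (shift2_mem_rowChains hE _ hx) hx' ?_ hi
    rw [hc, sub_add_cancel, hβ, hα]
    funext j
    simp only [hshift, add_assoc, sub_add_cancel]
  have hlen : n' = n := by
    by_contra hne
    have := hr.pos
    have := hr'.pos
    rcases Nat.lt_or_gt_of_ne hne with hlt | hlt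
    · refine hr.row_not_mem (n - n') (by omega) (by omega) ?_
      have h0 := hbelow 0 (by omega)
      rw [hr'.row_zero, add_zero, ← Nat.cast_sub hlt.le] at h0
      rw [← hshift_mem_orbit1_iff (a := β - α), ← h0]
      exact mem_orbit1_self y
    · refine hr'.row_not_mem (n' - n) (by omega) (by omega) ?_
      rw [Nat.cast_sub hlt.le, hbelow _ (by omega), show (n : ℤ) - n' + (n' - n) = 0 by ring,
        hr.row_zero]
      exact hshift_mem_orbit1 _ y
  subst hlen
  exact ⟨rfl, β - α, fun i hi => by simpa using hbelow i (by omega)⟩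

end FirstReturns

lemma IsFirstReturn.len_eq_of_rows_eq {y : ℤ → S} {x x' : ℤ × ℤ → S} {n n' : ℕ}
    (hr : IsFirstReturn y x n) (hr' : IsFirstReturn y x' n')
    (h : ∀ i : ℕ, i ≤ n → i ≤ n' → row x i = row x' i) : n = n' := by
  by_contra hne
  rcases Nat.lt_or_gt_of_ne hne with hlt | hlt
  · exact hr'.row_not_mem n hr.pos hlt (h n le_rfl hlt.le ▸ hr.row_len)
  · exact hr.row_not_mem n' hr'.pos hlt (h n' hlt.le le_rfl ▸ hr'.row_len)

section Stack

variable {ι : Type*} (len : ι → ℕ) (A : ι → ℤ) (ε : ℕ → ι)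

structure StackCursor where
  block : ℕ
  pos : ℕ
  offset : ℤ

/-- Height `h ≥ 0` of the stack is row `pos` of the return `c (ε block)`, translated by
`offset`. -/
def stackCursor : ℕ → StackCursor
  | 0 => ⟨0, 0, 0⟩
  | h + 1 =>
    let s := stackCursor h
    if s.pos + 1 < len (ε s.block) then ⟨s.block, s.pos + 1, s.offset⟩
    else ⟨s.block + 1, 0, s.offset + A (ε s.block)⟩

def stackRow (c : ι → ℤ × ℤ → S) (h : ℕ) : ℤ → S :=
  hshift (stackCursor len A ε h).offset
    (row (c (ε (stackCursor len A ε h).block)) (stackCursor len A ε h).pos)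

def stack (c : ι → ℤ × ℤ → S) : ℤ × ℤ → S :=
  ofRows fun h => if 0 ≤ h then stackRow len A ε c h.toNat else row (c (ε 0)) h

def blockStart (i : ℕ) : ℕ := ∑ j ∈ Finset.range i, len (ε j)

def blockOffset (i : ℕ) : ℤ := ∑ j ∈ Finset.range i, A (ε j)

variable {len A ε}

lemma stackCursor_pos_lt (hlen : ∀ b, 0 < len b) (h : ℕ) :
    (stackCursor len A ε h).pos < len (ε (stackCursor len A ε h).block) := by
  induction h with
  | zero => exact hlen _
  | succ h ih =>
    simp only [stackCursor]
    split_ifs with hlt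
    · exact hlt
    · exact hlen _

lemma stackCursor_add_of_pos_eq_zero {h i : ℕ} {T : ℤ} (hh : stackCursor len A ε h = ⟨i, 0, T⟩)
    {r : ℕ} (hr : r < len (ε i)) : stackCursor len A ε (h + r) = ⟨i, r, T⟩ := by
  induction r with
  | zero => exact hh
  | succ r ih =>
    rw [← add_assoc, stackCursor, ih (by omega)]
    simp [hr]

lemma stackCursor_blockStart (hlen : ∀ b, 0 < len b) (i : ℕ) :
    stackCursor len A ε (blockStart len ε i) = ⟨i, 0, blockOffset A ε i⟩ := by
  induction i with
  | zero => rfl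
  | succ i ih =>
    have hlast := stackCursor_add_of_pos_eq_zero ih (Nat.sub_one_lt (hlen (ε i)).ne')
    have hsucc : blockStart len ε (i + 1) = blockStart len ε i + (len (ε i) - 1) + 1 := by
      have := hlen (ε i)
      simp only [blockStart, Finset.sum_range_succ]
      omega
    rw [hsucc, stackCursor, hlast]
    simp [Nat.sub_add_cancel (hlen (ε i)), blockOffset, Finset.sum_range_succ]

lemma stackCursor_blockStart_add (hlen : ∀ b, 0 < len b) (i : ℕ) {r : ℕ} (hr : r < len (ε i)) :
    stackCursor len A ε (blockStart len ε i + r) = ⟨i, r, blockOffset A ε i⟩ :=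
  stackCursor_add_of_pos_eq_zero (stackCursor_blockStart hlen i) hr

variable {c : ι → ℤ × ℤ → S} {y : ℤ → S}

lemma stackRow_succ (hc : ∀ b, IsFirstReturn y (c b) (len b))
    (hA : ∀ b, row (c b) (len b) = hshift (A b) y) (h : ℕ) :
    stackRow len A ε c (h + 1) = hshift (stackCursor len A ε h).offset
      (row (c (ε (stackCursor len A ε h).block)) ((stackCursor len A ε h).pos + 1)) := by
  have hpos := stackCursor_pos_lt (A := A) (ε := ε) (fun b => (hc b).pos) h
  simp only [stackRow, stackCursor]
  split_ifs with hlt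
  · push_cast
    rfl
  · dsimp only
    rw [show ((stackCursor len A ε h).pos : ℤ) + 1 = len (ε (stackCursor len A ε h).block) by
      omega, hA, Nat.cast_zero, (hc _).row_zero, hshift_hshift]

lemma stackRow_blockStart_add (hc : ∀ b, IsFirstReturn y (c b) (len b))
    (hA : ∀ b, row (c b) (len b) = hshift (A b) y) (i : ℕ) {r : ℕ} (hr : r ≤ len (ε i)) :
    stackRow len A ε c (blockStart len ε i + r) = hshift (blockOffset A ε i) (row (c (ε i)) r) := by
  have hlen b := (hc b).pos
  cases r with
  | zero => simp [stackRow, stackCursor_blockStart hlen i]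
  | succ r =>
    rw [← add_assoc, stackRow_succ hc hA, stackCursor_blockStart_add hlen i (by omega)]
    push_cast
    rfl

lemma row_stack_natCast (h : ℕ) : row (stack len A ε c) h = stackRow len A ε c h := by
  simp [stack]

lemma stack_mem_rowChains {E : (ℤ → S) → (ℤ → S) → Prop} (hE : ShiftInvariant E)
    (hcE : ∀ b, c b ∈ rowChains E) (hc : ∀ b, IsFirstReturn y (c b) (len b))
    (hA : ∀ b, row (c b) (len b) = hshift (A b) y) : stack len A ε c ∈ rowChains E := by
  intro i
  rcases lt_trichotomy i (-1) with hi | rfl | hi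
  · simpa [stack, show ¬ 0 ≤ i by omega, show ¬ 0 ≤ i + 1 by omega] using hcE (ε 0) i
  · simpa [stack, stackRow, stackCursor] using hcE (ε 0) (-1)
  · lift i to ℕ using (by omega)
    rw [show (i : ℤ) + 1 = ((i + 1 : ℕ) : ℤ) by push_cast; rfl, row_stack_natCast,
      row_stack_natCast, stackRow_succ hc hA]
    exact hE _ _ _ (by simpa using hcE _ (stackCursor len A ε i).pos)

lemma stack_injective (hc : ∀ b, IsFirstReturn y (c b) (len b))
    (hA : ∀ b, row (c b) (len b) = hshift (A b) y)
    (hsep : ∀ b b', len b = len b' → (∀ i : ℕ, i ≤ len b → row (c b) i = row (c b') i) → b = b') :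
    Function.Injective fun ε => stack len A ε c := by
  intro ε ε' heq
  funext i
  induction i using Nat.strong_induction_on with
  | _ i ih =>
  have hstart : blockStart len ε i = blockStart len ε' i :=
    Finset.sum_congr rfl fun j hj => by rw [ih j (Finset.mem_range.1 hj)]
  have hoffset : blockOffset A ε i = blockOffset A ε' i :=
    Finset.sum_congr rfl fun j hj => by rw [ih j (Finset.mem_range.1 hj)]
  have hrows (r : ℕ) (hr : r ≤ len (ε i)) (hr' : r ≤ len (ε' i)) :
      row (c (ε i)) r = row (c (ε' i)) r := by
    have := congrArg (row · ((blockStart len ε i + r : ℕ) : ℤ)) heq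
    simp only [row_stack_natCast] at this
    rw [stackRow_blockStart_add hc hA i hr, hstart, stackRow_blockStart_add hc hA i hr',
      hoffset] at this
    exact hshift_injective _ this
  have hlen := (hc (ε i)).len_eq_of_rows_eq (hc (ε' i)) hrows
  exact hsep _ _ hlen fun r hr => hrows r hr (hlen ▸ hr)

end Stack

theorem uniqueFirstReturns_of_countable {E : (ℤ → S) → (ℤ → S) → Prop} (hE : ShiftInvariant E)
    (hX : (rowChains E).Countable) : UniqueFirstReturns (rowChains E) := by
  intro y x x' n n' hx hx' hr hr'
  by_contra hne
  obtain ⟨α, hα⟩ := hr.row_len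
  obtain ⟨β, hβ⟩ := hr'.row_len
  let c : Bool → ℤ × ℤ → S := fun b => bif b then x' else x
  let len : Bool → ℕ := fun b => bif b then n' else n
  let A : Bool → ℤ := fun b => bif b then β else α
  have hc : ∀ b, IsFirstReturn y (c b) (len b) := Bool.forall_bool.2 ⟨hr, hr'⟩
  have hA : ∀ b, row (c b) (len b) = hshift (A b) y := Bool.forall_bool.2 ⟨hα, hβ⟩
  have hsep (b b' : Bool) (hlen : len b = len b')
      (hrows : ∀ i : ℕ, i ≤ len b → row (c b) i = row (c b') i) : b = b' := by
    cases b <;> cases b'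
    · rfl
    · exact (hne ⟨hlen.symm, 0, fun i hi => by simpa [c] using (hrows i hi).symm⟩).elim
    · exact (hne ⟨hlen, 0, fun i hi => by simpa [c] using hrows i (hlen ▸ hi)⟩).elim
    · rfl
  have hstack ε : stack len A ε c ∈ rowChains E :=
    stack_mem_rowChains hE (Bool.forall_bool.2 ⟨hx, hx'⟩) hc hA
  have hunc : Uncountable (ℕ → Bool) := by
    rw [← Cardinal.aleph0_lt_mk_iff]
    simpa using Cardinal.aleph0_lt_continuum
  have : Countable (rowChains E) := hX.to_subtype
  exact hunc.not_countable <|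
    Function.Injective.countable (f := fun ε => (⟨stack len A ε c, hstack ε⟩ : rowChains E))
      fun ε ε' h => stack_injective hc hA hsep (congrArg Subtype.val h)

theorem R_property_of_countable_or_deterministic_general {S : Type}
    (X : Set (ℤ × ℤ → S)) (hX : IsNNSFT X) (h : X.Countable ∨ SouthDet X) :
    RProperty X := by
  obtain ⟨E, hE, rfl⟩ := hX.exists_eq_rowChains
  exact rProperty_of_uniqueFirstReturns hE <|
    h.elim (uniqueFirstReturns_of_countable hE) (uniqueFirstReturns_of_southDet hE)

/-- A two-dimensional SFT defined by nearest-neighbor (Wang tile)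
constraints which is countable or southward deterministic has the R property. -/
theorem R_property_of_countable_or_deterministic {S : Type} [Fintype S]
    (X : Set (ℤ × ℤ → S)) (hX : IsNNSFT X) (h : X.Countable ∨ SouthDet X) :
    RProperty X :=
  R_property_of_countable_or_deterministic_general X hX h
end
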